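/- arXiv:2602.16275 — 3 statements merged into one kernel-verified Lean document; each statement's English description precedes it below -/
import Mathlib

section
/- For any real h with 0 ≤ h < 2, the inequality arccos(1 - h²/2) - h ≥ h³/24 holds. -/
/-!
Writing `h = 2x`, the identity `cos (2 arcsin x) = 1 - 2x²` gives
`arccos (1 - h²/2) = 2 arcsin (h/2)`, so the claim is `arcsin x ≥ x + x³/6` for `0 ≤ x ≤ 1`.
That follows by monotonicity from `arcsin' t = (1 - t²)^(-1/2) ≥ 1 + t²/2`, which after squaring
is `(1 + t²/2)² (1 - t²) = 1 - 3t⁴/4 - t⁶/4 ≤ 1`.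
-/

open Real Set

theorem Real.one_add_sq_div_two_le_one_div_sqrt_one_sub_sq {t : ℝ} (ht : t ^ 2 < 1) :
    1 + t ^ 2 / 2 ≤ 1 / √(1 - t ^ 2) := by
  have hs : 0 < √(1 - t ^ 2) := sqrt_pos.2 (by linarith)
  have hsq : √(1 - t ^ 2) ^ 2 = 1 - t ^ 2 := sq_sqrt (by linarith)
  rw [le_div_iff₀ hs]
  refine (pow_le_one_iff_of_nonneg (by positivity) two_ne_zero).1 ?_
  rw [mul_pow, hsq]
  nlinarith [pow_nonneg (sq_nonneg t) 2, pow_nonneg (sq_nonneg t) 3]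

theorem Real.add_pow_three_div_six_le_arcsin {x : ℝ} (hx₀ : 0 ≤ x) (hx₁ : x ≤ 1) :
    x + x ^ 3 / 6 ≤ arcsin x := by
  let g : ℝ → ℝ := fun t ↦ arcsin t - (t + t ^ 3 / 6)
  have hg : MonotoneOn g (Icc 0 1) := by
    refine monotoneOn_of_hasDerivWithinAt_nonneg (convex_Icc 0 1)
      (f' := fun t ↦ 1 / √(1 - t ^ 2) - (1 + t ^ 2 / 2)) (by fun_prop) (fun t ht ↦ ?_)
      (fun t ht ↦ ?_)
    all_goals rw [interior_Icc] at ht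
    · have hderiv := (hasDerivAt_arcsin (by linarith [ht.1]) ht.2.ne).sub
        ((hasDerivAt_id' t).add ((hasDerivAt_pow 3 t).div_const 6))
      exact (hderiv.congr_deriv (by norm_num; ring)).hasDerivWithinAt
    · exact sub_nonneg.2
        (one_add_sq_div_two_le_one_div_sqrt_one_sub_sq (by nlinarith [ht.1, ht.2]))
  have := hg ⟨le_rfl, zero_le_one⟩ ⟨hx₀, hx₁⟩ hx₀
  simpa [g] using this

theorem Real.arccos_one_sub_two_mul_sq {x : ℝ} (hx₀ : 0 ≤ x) (hx₁ : x ≤ 1) :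
    arccos (1 - 2 * x ^ 2) = 2 * arcsin x := by
  have hcos : cos (2 * arcsin x) = 1 - 2 * x ^ 2 := by
    rw [cos_two_mul, cos_arcsin, sq_sqrt (by nlinarith)]
    ring
  rw [← hcos, arccos_cos]
  · linarith [arcsin_nonneg.2 hx₀]
  · linarith [arcsin_le_pi_div_two x]

/-- Per-step phase error of the first-order symplectic integrator for the
harmonic oscillator: for `0 ≤ h < 2`, `arccos (1 - h²/2) - h ≥ h³/24`. -/
theorem stmt_0 (h : ℝ) (h0 : 0 ≤ h) (h2 : h < 2) :
    Real.arccos (1 - h ^ 2 / 2) - h ≥ h ^ 3 / 24 := by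
  have hx₀ : 0 ≤ h / 2 := by linarith
  have hx₁ : h / 2 ≤ 1 := by linarith
  have hphase : arccos (1 - h ^ 2 / 2) = 2 * arcsin (h / 2) := by
    rw [← arccos_one_sub_two_mul_sq hx₀ hx₁]
    ring_nf
  have := add_pow_three_div_six_le_arcsin hx₀ hx₁
  rw [hphase]
  linarith
end

section
/- Let a, b ≥ 0 and 0 < s < 1. Then a^s + b^s - (a+b)^s ≥ (2 - 2^s) · (min(a,b))^s. -/
/-!
For a concave function, the increment `f (y + d) - f y` over a step of fixed length `d` decreases
as the starting point `y` moves right. Applied to `x ↦ x ^ s` with `a ≤ b` and step `a`, this gives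
`(a + b) ^ s - b ^ s ≤ (2 * a) ^ s - a ^ s = (2 ^ s - 1) * a ^ s`, which rearranges to the claim.
-/

theorem ConcaveOn.map_add_sub_map_le_map_add_sub_map {𝕜 β : Type*} [Field 𝕜] [LinearOrder 𝕜]
    [IsStrictOrderedRing 𝕜] [AddCommGroup β] [PartialOrder β] [IsOrderedAddMonoid β]
    [Module 𝕜 β] {s : Set 𝕜} {f : 𝕜 → β} (hf : ConcaveOn 𝕜 s f) {x y d : 𝕜}
    (hx : x ∈ s) (hyd : y + d ∈ s) (hxy : x ≤ y) (hd : 0 ≤ d) :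
    f (y + d) - f y ≤ f (x + d) - f x := by
  rcases (add_nonneg (sub_nonneg.2 hxy) hd).eq_or_lt with hL | hL
  · obtain ⟨rfl, rfl⟩ : y = x ∧ d = 0 := by constructor <;> linarith
    rfl
  -- `x + d` and `y` split the segment `[x, y + d]` in mirrored proportions.
  have ht : 0 ≤ d / (y - x + d) := by positivity
  have hu : 0 ≤ (y - x) / (y - x + d) := div_nonneg (sub_nonneg.2 hxy) hL.le
  have hweights_sum : (y - x) / (y - x + d) + d / (y - x + d) = 1 := by field_simp
  have hf_xd := hf.2 hx hyd hu ht hweights_sum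
  have hf_y := hf.2 hx hyd ht hu (by rwa [add_comm])
  have hxd : ((y - x) / (y - x + d)) • x + (d / (y - x + d)) • (y + d) = x + d := by
    rw [smul_eq_mul, smul_eq_mul]; field_simp; ring
  have hy : (d / (y - x + d)) • x + ((y - x) / (y - x + d)) • (y + d) = y := by
    rw [smul_eq_mul, smul_eq_mul]; field_simp; ring
  rw [hxd] at hf_xd
  rw [hy] at hf_y
  have hweights : ((y - x) / (y - x + d)) • f x + (d / (y - x + d)) • f (y + d) +
      ((d / (y - x + d)) • f x + ((y - x) / (y - x + d)) • f (y + d)) = f x + f (y + d) := by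
    rw [add_add_add_comm, ← add_smul, ← add_smul, add_comm (d / _), hweights_sum, one_smul, one_smul]
  rw [sub_le_sub_iff, add_comm]
  exact hweights ▸ add_le_add hf_xd hf_y

theorem Real.add_rpow_sub_rpow_le {a b s : ℝ} (ha : 0 ≤ a) (hab : a ≤ b) (hs0 : 0 ≤ s)
    (hs1 : s ≤ 1) : (b + a) ^ s - b ^ s ≤ (2 ^ s - 1) * a ^ s := by
  have hincr := (Real.concaveOn_rpow hs0 hs1).map_add_sub_map_le_map_add_sub_map
    (Set.mem_Ici.2 ha) (Set.mem_Ici.2 (by linarith)) hab ha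
  rw [← two_mul, Real.mul_rpow zero_le_two ha] at hincr
  rwa [sub_one_mul]

/-- For `a, b ≥ 0` and `0 < s < 1`,
`a^s + b^s - (a+b)^s ≥ (2 - 2^s) · (min a b)^s`. -/
theorem stmt_3 (a b s : ℝ) (ha : 0 ≤ a) (hb : 0 ≤ b) (hs0 : 0 < s) (hs1 : s < 1) :
    a ^ s + b ^ s - (a + b) ^ s ≥ (2 - 2 ^ s) * (min a b) ^ s := by
  rcases le_total a b with hab | hba
  · have := Real.add_rpow_sub_rpow_le ha hab hs0.le hs1.le
    rw [min_eq_left hab, add_comm a b]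
    linarith
  · have := Real.add_rpow_sub_rpow_le hb hba hs0.le hs1.le
    rw [min_eq_right hba]
    linarith
end

section
/- Let 0 < s < 1 and n ≥ 1. Suppose â, b̂ : ℤⁿ → ℝ satisfy |â(k)| ≤ exp(-|k|^s) and |b̂(k)| ≤ exp(-|k|^s) for all k (with |k| the ℓ¹ norm). Then there is a constant C = C(n,s) such that for all k ∈ ℤⁿ, |(â * b̂)(k)| ≤ C · exp(-|k|^s), where (â * b̂)(k) = ∑_{k'} â(k - k') b̂(k'). -/
/-!
Since `t ↦ t ^ s` is concave, for `w ≤ u + v` one has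
`u ^ s + v ^ s - w ^ s ≥ (2 - 2 ^ s) * min u v ^ s`, and `2 - 2 ^ s > 0` because `s < 1`.
Applied to `u = |k - k'|`, `v = |k'|`, `w = |k|`, each term of the convolution is bounded by
`exp (-|k| ^ s)` times `g (k - k') + g k'` with `g k = exp (-(2 - 2 ^ s) * |k| ^ s)`, and `g` is
summable over `ℤⁿ` since it is dominated by a product of summable one-dimensional factors.
So `C = 2 * ∑ g` works.
-/

open Real Filter

theorem ConcaveOn.add_le_add_swap_combo {E : Type*} [AddCommGroup E] [Module ℝ E] {s : Set E}
    {f : E → ℝ} (hf : ConcaveOn ℝ s f) {x y : E} (hx : x ∈ s) (hy : y ∈ s) {a b : ℝ}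
    (ha : 0 ≤ a) (hb : 0 ≤ b) (hab : a + b = 1) :
    f x + f y ≤ f (a • x + b • y) + f (b • x + a • y) := by
  have h₁ := hf.2 hx hy ha hb hab
  have h₂ := hf.2 hx hy hb ha (by rwa [add_comm])
  simp only [smul_eq_mul] at h₁ h₂
  linear_combination h₁ + h₂ - (f x + f y) * hab

theorem add_rpow_le_rpow_add_mul_rpow {s x y : ℝ} (hs0 : 0 < s) (hs1 : s ≤ 1) (hy : 0 ≤ y)
    (hyx : y ≤ x) : (x + y) ^ s ≤ x ^ s + (2 ^ s - 1) * y ^ s := by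
  obtain rfl | hx := (hy.trans hyx).eq_or_lt
  · obtain rfl : y = 0 := le_antisymm hyx hy
    simp [zero_rpow hs0.ne']
  -- `(y, x + y)` majorizes `(x, 2 * y)`, which Karamata's inequality turns into the claim
  have key := (concaveOn_rpow hs0.le hs1).add_le_add_swap_combo (Set.mem_Ici.2 hy)
    (Set.mem_Ici.2 (by linarith : 0 ≤ x + y)) (div_nonneg hy hx.le)
    (sub_nonneg.2 (div_le_one_of_le₀ hyx hx.le)) (add_sub_cancel _ _)
  have e₁ : y / x * y + (1 - y / x) * (x + y) = x := by field_simp; ring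
  have e₂ : (1 - y / x) * y + y / x * (x + y) = 2 * y := by field_simp; ring
  simp only [smul_eq_mul, e₁, e₂, mul_rpow zero_le_two hy] at key
  linarith

theorem mul_rpow_min_le_rpow_add_rpow_sub_rpow {s u v w : ℝ} (hs0 : 0 < s) (hs1 : s ≤ 1)
    (hu : 0 ≤ u) (hv : 0 ≤ v) (hw : 0 ≤ w) (hwuv : w ≤ u + v) :
    (2 - 2 ^ s) * min u v ^ s ≤ u ^ s + v ^ s - w ^ s := by
  wlog hvu : v ≤ u generalizing u v
  · rw [min_comm, add_comm (u ^ s)]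
    exact this hv hu (by linarith) (by linarith)
  have h₁ : w ^ s ≤ (u + v) ^ s := rpow_le_rpow hw hwuv hs0.le
  have h₂ := add_rpow_le_rpow_add_mul_rpow hs0 hs1 hv hvu
  rw [min_eq_right hvu]
  linarith

theorem summable_exp_neg_mul_rpow_nat {c s : ℝ} (hc : 0 < c) (hs : 0 < s) :
    Summable fun m : ℕ => exp (-(c * (m : ℝ) ^ s)) := by
  have hlim : Tendsto (fun m : ℕ => (m : ℝ) ^ s) atTop atTop :=
    (tendsto_rpow_atTop hs).comp tendsto_natCast_atTop_atTop
  have hO := ((isLittleO_exp_neg_mul_rpow_atTop hc (-2 / s)).comp_tendsto hlim).isBigO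
  refine summable_of_isBigO_nat (Real.summable_nat_rpow.2 (by norm_num : (-2 : ℝ) < -1)) ?_
  refine (hO.congr_left fun m => by simp only [Function.comp, neg_mul]).congr_right fun m => ?_
  simp only [Function.comp, ← rpow_mul (Nat.cast_nonneg m), mul_div_cancel₀ _ hs.ne']

theorem summable_exp_neg_mul_abs_rpow_int {c s : ℝ} (hc : 0 < c) (hs : 0 < s) :
    Summable fun m : ℤ => exp (-(c * |(m : ℝ)| ^ s)) := by
  apply Summable.of_nat_of_neg <;> simpa using summable_exp_neg_mul_rpow_nat hc hs

theorem Summable.pi_prod_of_nonneg {α : Type*} {f : α → ℝ} (hf : Summable f) (hf0 : 0 ≤ f) :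
    ∀ n : ℕ, Summable fun x : Fin n → α => ∏ i, f (x i)
  | 0 => .of_finite
  | n + 1 => by
    have := (hf.mul_of_nonneg (hf.pi_prod_of_nonneg hf0 n) hf0
      fun x => Finset.prod_nonneg fun i _ => hf0 _)
    refine ((Fin.consEquiv fun _ => α).symm.summable_iff.2 this).congr fun x => ?_
    simp [Fin.prod_univ_succ, Fin.tail, Fin.consEquiv]

theorem exp_neg_rpow_mul_exp_neg_rpow_le {s u v w : ℝ} (hs0 : 0 < s) (hs1 : s ≤ 1)
    (hu : 0 ≤ u) (hv : 0 ≤ v) (hw : 0 ≤ w) (hwuv : w ≤ u + v) :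
    exp (-u ^ s) * exp (-v ^ s) ≤
      exp (-w ^ s) * (exp (-((2 - 2 ^ s) * u ^ s)) + exp (-((2 - 2 ^ s) * v ^ s))) := by
  have hmin := mul_rpow_min_le_rpow_add_rpow_sub_rpow hs0 hs1 hu hv hw hwuv
  calc exp (-u ^ s) * exp (-v ^ s) ≤ exp (-w ^ s) * exp (-((2 - 2 ^ s) * min u v ^ s)) := by
        rw [← exp_add, ← exp_add]
        exact exp_le_exp.2 (by linarith)
    _ ≤ _ := by
        gcongr
        rcases min_choice u v with h | h <;> rw [h] <;> linarith [exp_pos (-((2 - 2 ^ s) * u ^ s)),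
          exp_pos (-((2 - 2 ^ s) * v ^ s))]

def l1norm {ι : Type*} [Fintype ι] (k : ι → ℤ) : ℝ := ∑ i, |(k i : ℝ)|

theorem l1norm_nonneg {ι : Type*} [Fintype ι] (k : ι → ℤ) : 0 ≤ l1norm k :=
  Finset.sum_nonneg fun _ _ => abs_nonneg _

theorem l1norm_le_sub_add {ι : Type*} [Fintype ι] (k k' : ι → ℤ) :
    l1norm k ≤ l1norm (k - k') + l1norm k' := by
  unfold l1norm
  rw [← Finset.sum_add_distrib]
  gcongr with i
  simpa using abs_sub_le (k i : ℝ) (k' i) 0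

theorem summable_exp_neg_mul_l1norm_rpow {c s : ℝ} (hc : 0 < c) (hs : 0 < s) (n : ℕ) :
    Summable fun k : Fin n → ℤ => exp (-(c * l1norm k ^ s)) := by
  obtain rfl | hn := n.eq_zero_or_pos
  · exact .of_finite
  have hcn : 0 < c / n := by positivity
  refine ((summable_exp_neg_mul_abs_rpow_int hcn hs).pi_prod_of_nonneg (fun m => (exp_pos _).le)
    n).of_nonneg_of_le (fun _ => (exp_pos _).le) fun k => ?_
  have hcoord : ∑ i, |(k i : ℝ)| ^ s ≤ n * l1norm k ^ s := by
    calc ∑ i, |(k i : ℝ)| ^ s ≤ ∑ _i : Fin n, l1norm k ^ s := by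
          gcongr with i
          exact Finset.single_le_sum (fun j _ => abs_nonneg ((k j : ℝ))) (Finset.mem_univ i)
      _ = n * l1norm k ^ s := by simp
  rw [← exp_sum, exp_le_exp, Finset.sum_neg_distrib, ← Finset.mul_sum, neg_le_neg_iff]
  calc c / n * ∑ i, |(k i : ℝ)| ^ s ≤ c / n * (n * l1norm k ^ s) := by gcongr
    _ = c * l1norm k ^ s := by field_simp

theorem norm_tsum_le_of_norm_le_sub_add {G E : Type*} [AddCommGroup G] [SeminormedAddCommGroup E]
    {f : G → E} {g : G → ℝ} (hg : Summable g) (M : ℝ) (k : G)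
    (hf : ∀ k', ‖f k'‖ ≤ M * (g (k - k') + g k')) :
    ‖∑' k', f k'‖ ≤ M * (2 * ∑' k', g k') := by
  have hsub : HasSum (fun k' => g (k - k')) (∑' k', g k') :=
    (Equiv.subLeft k).hasSum_iff.2 hg.hasSum
  refine tsum_of_norm_bounded ?_ hf
  rw [two_mul]
  exact (hsub.add hg.hasSum).mul_left M

theorem stmt_8_general (n : ℕ) (s : ℝ) (hs0 : 0 < s) (hs1 : s < 1)
    (a b : (Fin n → ℤ) → ℝ)
    (ha : ∀ k, |a k| ≤ Real.exp (-(∑ i, |(k i : ℝ)|) ^ s))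
    (hb : ∀ k, |b k| ≤ Real.exp (-(∑ i, |(k i : ℝ)|) ^ s)) :
    ∃ C : ℝ, ∀ k : Fin n → ℤ,
      |∑' k' : Fin n → ℤ, a (k - k') * b k'| ≤
        C * Real.exp (-(∑ i, |(k i : ℝ)|) ^ s) := by
  have hc : 0 < 2 - (2 : ℝ) ^ s := by
    linarith [rpow_lt_rpow_of_exponent_lt one_lt_two hs1, rpow_one (2 : ℝ)]
  set g : (Fin n → ℤ) → ℝ := fun k => exp (-((2 - 2 ^ s) * l1norm k ^ s))
  refine ⟨2 * ∑' k, g k, fun k => ?_⟩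
  have hterm : ∀ k', ‖a (k - k') * b k'‖ ≤ exp (-l1norm k ^ s) * (g (k - k') + g k') := fun k' =>
    calc ‖a (k - k') * b k'‖ ≤ exp (-l1norm (k - k') ^ s) * exp (-l1norm k' ^ s) := by
          rw [norm_mul]
          exact mul_le_mul (ha _) (hb _) (abs_nonneg _) (exp_pos _).le
      _ ≤ _ := exp_neg_rpow_mul_exp_neg_rpow_le hs0 hs1.le (l1norm_nonneg _) (l1norm_nonneg _)
          (l1norm_nonneg k) (l1norm_le_sub_add k k')
  rw [← Real.norm_eq_abs, mul_comm]
  exact norm_tsum_le_of_norm_le_sub_add (summable_exp_neg_mul_l1norm_rpow hc hs0 n) _ k hterm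

/-- Gevrey decay is preserved under lattice convolution: if
`|â(k)|, |b̂(k)| ≤ exp(-|k|₁^s)` on `ℤⁿ`, then there is `C = C(n,s)` with
`|(â * b̂)(k)| ≤ C · exp(-|k|₁^s)` for all `k`. -/
theorem stmt_8 (n : ℕ) (hn : 1 ≤ n) (s : ℝ) (hs0 : 0 < s) (hs1 : s < 1)
    (a b : (Fin n → ℤ) → ℝ)
    (ha : ∀ k, |a k| ≤ Real.exp (-(∑ i, |(k i : ℝ)|) ^ s))
    (hb : ∀ k, |b k| ≤ Real.exp (-(∑ i, |(k i : ℝ)|) ^ s)) :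
    ∃ C : ℝ, ∀ k : Fin n → ℤ,
      |∑' k' : Fin n → ℤ, a (k - k') * b k'| ≤
        C * Real.exp (-(∑ i, |(k i : ℝ)|) ^ s) :=
  stmt_8_general n s hs0 hs1 a b ha hb
end
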